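/- arXiv:2309.00360 — 5 statements merged into one kernel-verified Lean document; each statement's English description precedes it below -/
import Mathlib

section
/- In a linear space, the parallelity relation, restricted to the set of all affine lines, is an equivalence relation; in particular, two distinct parallels of an affine line are disjoint from each other. -/
/-!
Through a point outside an affine line `A` there is exactly one line disjoint from `A`, so two
lines parallel to `A` that share a point coincide. Hence distinct parallels of `A` are disjoint,
which is also transitivity of parallelity through the affine line `A`.
-/

/-- A linear space: a point set `M` together with a collection of lines (subsets of `M`)
such that every line has at least 3 points, any two distinct points lie on exactly one
common line, and every point lies on at least 3 lines. -/
structure LinearSpace (M : Type*) where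
  lines : Set (Set M)
  exists_three_points : ∀ L ∈ lines, ∃ a b c : M,
    a ∈ L ∧ b ∈ L ∧ c ∈ L ∧ a ≠ b ∧ a ≠ c ∧ b ≠ c
  join_unique : ∀ p q : M, p ≠ q → ∃! L, L ∈ lines ∧ p ∈ L ∧ q ∈ L
  exists_three_lines : ∀ p : M, ∃ L₁ L₂ L₃, L₁ ∈ lines ∧ L₂ ∈ lines ∧ L₃ ∈ lines ∧
    p ∈ L₁ ∧ p ∈ L₂ ∧ p ∈ L₃ ∧ L₁ ≠ L₂ ∧ L₁ ≠ L₃ ∧ L₂ ≠ L₃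

namespace LinearSpace

variable {M : Type*}

/-- Two lines are parallel if they are equal or disjoint. -/
def Parallel (L K : Set M) : Prop := L = K ∨ L ∩ K = ∅

/-- A line `L` is affine if for every point `p ∉ L` there is exactly one line
through `p` disjoint from `L`. -/
def IsAffine (S : LinearSpace M) (L : Set M) : Prop :=
  L ∈ S.lines ∧ ∀ p ∉ L, ∃! K, K ∈ S.lines ∧ p ∈ K ∧ K ∩ L = ∅

/-- A line is projective if it meets every other line. -/
def IsProjective (S : LinearSpace M) (L : Set M) : Prop :=
  L ∈ S.lines ∧ ∀ K ∈ S.lines, K ≠ L → (L ∩ K).Nonempty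

/-- An affine line is biaffine if every line parallel to it is also affine. -/
def IsBiaffine (S : LinearSpace M) (L : Set M) : Prop :=
  S.IsAffine L ∧ ∀ K ∈ S.lines, Parallel K L → S.IsAffine K

theorem Parallel.refl (L : Set M) : Parallel L L := Or.inl rfl

theorem Parallel.symm {L K : Set M} (h : Parallel L K) : Parallel K L :=
  h.imp Eq.symm fun h => (Set.inter_comm K L).trans h

theorem Parallel.eq_of_mem_of_mem {L K : Set M} {p : M} (h : Parallel L K) (hL : p ∈ L)
    (hK : p ∈ K) : L = K :=
  h.resolve_right fun hLK => Set.notMem_empty p (hLK ▸ ⟨hL, hK⟩)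

variable {S : LinearSpace M} {A K K' : Set M}

theorem IsAffine.eq_of_parallel_of_mem {p : M} (hA : S.IsAffine A) (hK : K ∈ S.lines)
    (hK' : K' ∈ S.lines) (hKA : Parallel K A) (hK'A : Parallel K' A) (hpK : p ∈ K)
    (hpK' : p ∈ K') : K = K' := by
  by_cases hpA : p ∈ A
  · rw [hKA.eq_of_mem_of_mem hpK hpA, hK'A.eq_of_mem_of_mem hpK' hpA]
  · have hKA' : K ∩ A = ∅ := hKA.resolve_left (ne_of_mem_of_not_mem' hpK hpA)
    have hK'A' : K' ∩ A = ∅ := hK'A.resolve_left (ne_of_mem_of_not_mem' hpK' hpA)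
    exact (hA.2 p hpA).unique ⟨hK, hpK, hKA'⟩ ⟨hK', hpK', hK'A'⟩

theorem IsAffine.inter_eq_empty_of_parallel (hA : S.IsAffine A) (hK : K ∈ S.lines)
    (hK' : K' ∈ S.lines) (hKA : Parallel K A) (hK'A : Parallel K' A) (hne : K ≠ K') :
    K ∩ K' = ∅ :=
  Set.eq_empty_of_forall_notMem fun _ ⟨hpK, hpK'⟩ =>
    hne (hA.eq_of_parallel_of_mem hK hK' hKA hK'A hpK hpK')

theorem IsAffine.parallel_trans (hA : S.IsAffine A) (hK : K ∈ S.lines) (hK' : K' ∈ S.lines)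
    (hKA : Parallel K A) (hAK' : Parallel A K') : Parallel K K' :=
  or_iff_not_imp_left.2 (hA.inter_eq_empty_of_parallel hK hK' hKA hAK'.symm)

end LinearSpace

open LinearSpace

/-- The parallelity relation, restricted to the set of all affine lines, is an
equivalence relation; in particular, two distinct parallels of an affine line are
disjoint from each other. -/
theorem parallel_equivalence_on_affine_lines {M : Type*} (S : LinearSpace M) :
    Equivalence (fun A B : {L : Set M // S.IsAffine L} => Parallel A.1 B.1) ∧
    (∀ A K K' : Set M, S.IsAffine A → K ∈ S.lines → K' ∈ S.lines →
      Parallel K A → Parallel K' A → K ≠ K' → K ∩ K' = ∅) := by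
  refine ⟨⟨fun A => Parallel.refl A.1, Parallel.symm, ?_⟩,
    fun A K K' hA hK hK' => hA.inter_eq_empty_of_parallel hK hK'⟩
  intro A B C hAB hBC
  exact B.2.parallel_trans A.2.1 C.2.1 hAB hBC
end

section
/- Let A and B be two biaffine lines of a linear space that intersect each other. Then every line parallel to A intersects every line parallel to B. -/
namespace LinearSpace

variable {M : Type*} {S : LinearSpace M}

theorem IsAffine.inter_nonempty_of_inter_eq_empty {K L₁ L₂ : Set M} {p : M}
    (hK : S.IsAffine K) (hL₁ : L₁ ∈ S.lines) (hL₂ : L₂ ∈ S.lines) (hne : L₁ ≠ L₂)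
    (hp₁ : p ∈ L₁) (hp₂ : p ∈ L₂) (hL₁K : L₁ ∩ K = ∅) : (L₂ ∩ K).Nonempty := by
  rw [Set.nonempty_iff_ne_empty]
  intro hL₂K
  have hpK : p ∉ K := fun hpK => hL₁K.subset ⟨hp₁, hpK⟩
  exact hne ((hK.2 p hpK).unique ⟨hL₁, hp₁, hL₁K⟩ ⟨hL₂, hp₂, hL₂K⟩)

theorem IsAffine.inter_nonempty_of_parallel {A A' L : Set M} (hA' : S.IsAffine A')
    (hpar : Parallel A' A) (hA : A ∈ S.lines) (hL : L ∈ S.lines) (hLA : L ≠ A)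
    (hmeet : (L ∩ A).Nonempty) : (L ∩ A').Nonempty := by
  rcases hpar with rfl | hdisj
  · exact hmeet
  obtain ⟨x, hxL, hxA⟩ := hmeet
  exact hA'.inter_nonempty_of_inter_eq_empty hA hL hLA.symm hxA hxL
    (by rwa [Set.inter_comm])

end LinearSpace

open LinearSpace

/-- If `A` and `B` are two intersecting biaffine lines, then every line parallel to `A`
intersects every line parallel to `B`. -/
theorem parallels_of_intersecting_biaffine_lines_meet {M : Type*} (S : LinearSpace M)
    (A B : Set M) (hA : S.IsBiaffine A) (hB : S.IsBiaffine B) (hAB : A ≠ B)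
    (hmeet : (A ∩ B).Nonempty) :
    ∀ A' ∈ S.lines, ∀ B' ∈ S.lines,
      Parallel A' A → Parallel B' B → (A' ∩ B').Nonempty := by
  intro A' hA' B' hB' hA'A hB'B
  have hA'B : A' ≠ B := by
    rintro rfl
    rcases hA'A with h | h
    exacts [hAB h.symm, hmeet.ne_empty (by rwa [Set.inter_comm])]
  have hBA' : (B ∩ A').Nonempty :=
    (hA.2 A' hA' hA'A).inter_nonempty_of_parallel hA'A hA.1.1 hB.1.1 hAB.symm
      (by rwa [Set.inter_comm])
  exact (hB.2 B' hB' hB'B).inter_nonempty_of_parallel hB'B hB.1.1 hA' hA'B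
    (by rwa [Set.inter_comm])
end

section
/- Let A and B be two intersecting biaffine lines of a linear space (M, 𝓛). For a point p and a biaffine line L, let P(L, p) denote the unique line through p parallel to L (with P(L, p) = L if p ∈ L). Then the map A × B → M sending a pair (a, b) to the unique intersection point of P(B, a) and P(A, b) is a bijection. -/
open LinearSpace

/-!
A line `K` parallel to the biaffine line `B` meets `A`: otherwise `A` and `B` would be two lines
through the point `A ∩ B` disjoint from the affine line `K`. Hence every point `m` lies on `P(B, a)`
for some `a ∈ A`, and on `P(A, b)` for some `b ∈ B`, which gives surjectivity. Injectivity holds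
because the parallels to `B` partition the points, and each of them meets `A` in at most one point.
-/

namespace LinearSpace

variable {M : Type*}

theorem not_parallel_iff {K L : Set M} : ¬ Parallel K L ↔ K ≠ L ∧ (K ∩ L).Nonempty := by
  simp [Parallel, Set.nonempty_iff_ne_empty]

theorem Parallel.eq_of_mem {K L : Set M} {p : M} (h : Parallel K L) (hK : p ∈ K) (hL : p ∈ L) :
    K = L :=
  h.resolve_right (Set.nonempty_iff_ne_empty.mp ⟨p, hK, hL⟩)

variable (S : LinearSpace M)

theorem eq_of_mem_of_mem {K L : Set M} {p q : M} (hK : K ∈ S.lines) (hL : L ∈ S.lines)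
    (hpq : p ≠ q) (hpK : p ∈ K) (hqK : q ∈ K) (hpL : p ∈ L) (hqL : q ∈ L) : K = L := by
  obtain ⟨U, -, hU⟩ := S.join_unique p q hpq
  exact (hU K ⟨hK, hpK, hqK⟩).trans (hU L ⟨hL, hpL, hqL⟩).symm

variable {S}

theorem IsAffine.eq_of_parallel {L K₁ K₂ : Set M} {p : M} (hL : S.IsAffine L)
    (h₁ : K₁ ∈ S.lines) (h₂ : K₂ ∈ S.lines) (hp₁ : p ∈ K₁) (hp₂ : p ∈ K₂)
    (hpar₁ : Parallel K₁ L) (hpar₂ : Parallel K₂ L) : K₁ = K₂ := by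
  by_cases hpL : p ∈ L
  · exact (hpar₁.eq_of_mem hp₁ hpL).trans (hpar₂.eq_of_mem hp₂ hpL).symm
  · have hd₁ : K₁ ∩ L = ∅ := hpar₁.resolve_left fun h => hpL (h ▸ hp₁)
    have hd₂ : K₂ ∩ L = ∅ := hpar₂.resolve_left fun h => hpL (h ▸ hp₂)
    obtain ⟨U, -, hU⟩ := hL.2 p hpL
    exact (hU K₁ ⟨h₁, hp₁, hd₁⟩).trans (hU K₂ ⟨h₂, hp₂, hd₂⟩).symm

theorem IsBiaffine.inter_nonempty_of_parallel {L C K : Set M} (hL : S.IsBiaffine L)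
    (hC : C ∈ S.lines) (hCL : ¬ Parallel C L) (hK : K ∈ S.lines) (hKL : Parallel K L) :
    (K ∩ C).Nonempty := by
  obtain ⟨hne, o, hoC, hoL⟩ := not_parallel_iff.mp hCL
  by_contra hKC
  rw [Set.not_nonempty_iff_eq_empty] at hKC
  have hoK : o ∉ K := fun hoK => hKC.subset ⟨hoK, hoC⟩
  have hKL' : K ∩ L = ∅ := hKL.resolve_left fun h => hoK (h ▸ hoL)
  obtain ⟨U, -, hU⟩ := (hL.2 K hK hKL).2 o hoK
  refine hne ((hU C ⟨hC, hoC, ?_⟩).trans (hU L ⟨hL.1.1, hoL, ?_⟩).symm)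
  · rwa [Set.inter_comm]
  · rwa [Set.inter_comm]

section ParallelThrough

variable {L C : Set M} {P : M → Set M}
  (hP : ∀ p, P p ∈ S.lines ∧ p ∈ P p ∧ Parallel (P p) L)
include hP

theorem IsAffine.eq_of_parallels_meet (hL : S.IsAffine L) (hC : C ∈ S.lines)
    (hCL : ¬ Parallel C L) {c c' x : M} (hc : c ∈ C) (hc' : c' ∈ C) (hx : x ∈ P c)
    (hx' : x ∈ P c') : c = c' := by
  have hcc' : P c = P c' := hL.eq_of_parallel (hP c).1 (hP c').1 hx hx' (hP c).2.2 (hP c').2.2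
  by_contra hne
  have hPC : P c = C :=
    S.eq_of_mem_of_mem (hP c).1 hC hne (hP c).2.1 (hcc' ▸ (hP c').2.1) hc hc'
  exact hCL (hPC ▸ (hP c).2.2)

theorem IsBiaffine.exists_mem_parallel (hL : S.IsBiaffine L) (hC : C ∈ S.lines)
    (hCL : ¬ Parallel C L) (m : M) : ∃ c ∈ C, m ∈ P c := by
  obtain ⟨c, hcm, hcC⟩ := hL.inter_nonempty_of_parallel hC hCL (hP m).1 (hP m).2.2
  have hPc : P c = P m :=
    hL.1.eq_of_parallel (hP c).1 (hP m).1 (hP c).2.1 hcm (hP c).2.2 (hP m).2.2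
  exact ⟨c, hcC, hPc ▸ (hP m).2.1⟩

end ParallelThrough

end LinearSpace

/-- For two intersecting biaffine lines `A` and `B`, the map `A × B → M` sending
`(a, b)` to the intersection point of `P (B, a)` and `P (A, b)` is a bijection.
Here `P` is the map assigning to an affine line `L` and a point `p` the unique
line through `p` parallel to `L`. -/
theorem biaffine_coordinates_bijective {M : Type*} (S : LinearSpace M)
    (A B : Set M) (hA : S.IsBiaffine A) (hB : S.IsBiaffine B) (hAB : A ≠ B)
    (hmeet : (A ∩ B).Nonempty)
    (P : Set M → M → Set M)
    (hP : ∀ L : Set M, ∀ p : M, S.IsAffine L →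
      P L p ∈ S.lines ∧ p ∈ P L p ∧ Parallel (P L p) L)
    (f : A × B → M)
    (hf : ∀ ab : A × B, f ab ∈ P B (ab.1 : M) ∧ f ab ∈ P A (ab.2 : M)) :
    Function.Bijective f := by
  have hAB' : ¬ Parallel A B := not_parallel_iff.mpr ⟨hAB, hmeet⟩
  have hBA' : ¬ Parallel B A := not_parallel_iff.mpr ⟨hAB.symm, Set.inter_comm A B ▸ hmeet⟩
  have hPA := fun p => hP A p hA.1
  have hPB := fun p => hP B p hB.1
  refine ⟨fun ⟨a, b⟩ ⟨a', b'⟩ h => ?_, fun m => ?_⟩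
  · have ha : (a : M) = a' := hB.1.eq_of_parallels_meet hPB hA.1.1 hAB' a.2 a'.2
      (hf (a, b)).1 (h ▸ (hf (a', b')).1)
    have hb : (b : M) = b' := hA.1.eq_of_parallels_meet hPA hB.1.1 hBA' b.2 b'.2
      (hf (a, b)).2 (h ▸ (hf (a', b')).2)
    exact Prod.ext (Subtype.ext ha) (Subtype.ext hb)
  · obtain ⟨a, ha, hma⟩ := hB.exists_mem_parallel hPB hA.1.1 hAB' m
    obtain ⟨b, hb, hmb⟩ := hA.exists_mem_parallel hPA hB.1.1 hBA' m
    refine ⟨(⟨a, ha⟩, ⟨b, hb⟩), ?_⟩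
    have hne : P B a ≠ P A b := fun h => hAB' <| by
      rw [← (hPA b).2.2.eq_of_mem (h ▸ (hPB a).2.1) ha, ← h]
      exact (hPB a).2.2
    by_contra hfm
    exact hne (S.eq_of_mem_of_mem (hPB a).1 (hPA b).1 hfm (hf (⟨a, ha⟩, ⟨b, hb⟩)).1 hma
      (hf (⟨a, ha⟩, ⟨b, hb⟩)).2 hmb)
end

section
/- Let (M, 𝓛) be a finite linear space in which every line is either affine or projective, and suppose there exists an affine line A with exactly q points. Then every point of M lies on exactly q + 1 lines. -/
/-!
For a point `p` off a line `L`, the lines through `p` are the `|L|` joins of `p` with points of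
`L` plus the lines through `p` missing `L`: one of those if `L` is affine, none if `L` is
projective. So each line gives all points off it pencils of equal size, which is `q + 1` off `A`.
A point `x ∈ A` lies off a second line `K` through some `y ∈ A`, `y ≠ x`, and a third line through
`y` has a point `r` off both `A` and `K`; then `|pencil x| = |pencil r| = q + 1`.
-/

namespace LinearSpace

variable {M : Type*} (S : LinearSpace M)

def pencil (p : M) : Set (Set M) := {K | K ∈ S.lines ∧ p ∈ K}

open Classical in
noncomputable def join (p a : M) : Set M :=
  if h : p ≠ a then (S.join_unique p a h).choose else ∅

lemma join_mem_pencil {p a : M} (h : p ≠ a) : S.join p a ∈ S.pencil p ∧ a ∈ S.join p a := by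
  rw [join, dif_pos h]
  obtain ⟨hK, hp, ha⟩ := (S.join_unique p a h).choose_spec.1
  exact ⟨⟨hK, hp⟩, ha⟩

variable {S}

lemma eq_of_mem_of_mem_s8 {a b : M} (hab : a ≠ b) {L K : Set M} (hL : L ∈ S.lines)
    (hK : K ∈ S.lines) (haL : a ∈ L) (hbL : b ∈ L) (haK : a ∈ K) (hbK : b ∈ K) : L = K :=
  (S.join_unique a b hab).unique ⟨hL, haL, hbL⟩ ⟨hK, haK, hbK⟩

lemma eq_join {p a : M} (h : p ≠ a) {K : Set M} (hK : K ∈ S.pencil p) (ha : a ∈ K) :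
    K = S.join p a :=
  have hJ := S.join_mem_pencil h
  eq_of_mem_of_mem_s8 h hK.1 hJ.1.1 hK.2 ha hJ.1.2 hJ.2

lemma notMem_of_ne_of_mem_inter {L K : Set M} (hL : L ∈ S.lines) (hK : K ∈ S.lines)
    (hLK : L ≠ K) {y z : M} (hyL : y ∈ L) (hyK : y ∈ K) (hzL : z ∈ L) (hzy : z ≠ y) :
    z ∉ K :=
  fun hzK => hLK (eq_of_mem_of_mem_s8 hzy hL hK hzL hyL hzK hyK)

lemma exists_mem_ne {L : Set M} (hL : L ∈ S.lines) (x : M) : ∃ y ∈ L, y ≠ x := by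
  obtain ⟨a, b, -, ha, hb, -, hab, -, -⟩ := S.exists_three_points L hL
  by_cases hax : a = x
  · exact ⟨b, hb, fun hbx => hab (hax.trans hbx.symm)⟩
  · exact ⟨a, ha, hax⟩

lemma exists_two_lines_ne (y : M) (A : Set M) :
    ∃ K ∈ S.pencil y, ∃ L ∈ S.pencil y, K ≠ A ∧ L ≠ A ∧ L ≠ K := by
  obtain ⟨L₁, L₂, L₃, h₁, h₂, h₃, hy₁, hy₂, hy₃, h₁₂, h₁₃, h₂₃⟩ := S.exists_three_lines y
  by_cases hA₁ : L₁ = A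
  · exact ⟨L₂, ⟨h₂, hy₂⟩, L₃, ⟨h₃, hy₃⟩, hA₁ ▸ h₁₂.symm, hA₁ ▸ h₁₃.symm, h₂₃.symm⟩
  by_cases hA₂ : L₂ = A
  · exact ⟨L₁, ⟨h₁, hy₁⟩, L₃, ⟨h₃, hy₃⟩, hA₁, hA₂ ▸ h₂₃.symm, h₁₃.symm⟩
  · exact ⟨L₁, ⟨h₁, hy₁⟩, L₂, ⟨h₂, hy₂⟩, hA₁, hA₂, h₁₂.symm⟩

lemma ncard_eq_ncard_pencil_meeting {p : M} {L : Set M} (hL : L ∈ S.lines) (hp : p ∉ L) :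
    L.ncard = {K ∈ S.pencil p | (K ∩ L).Nonempty}.ncard := by
  have hne {a : M} (ha : a ∈ L) : p ≠ a := fun h => hp (h ▸ ha)
  refine Set.ncard_congr (fun a _ => S.join p a) (fun a ha => ?_) (fun a b ha hb hab => ?_)
    (fun K ⟨hK, a, haK, haL⟩ => ⟨a, haL, (eq_join (hne haL) hK haK).symm⟩)
  · exact ⟨(S.join_mem_pencil (hne ha)).1, a, (S.join_mem_pencil (hne ha)).2, ha⟩
  · by_contra hab'
    have hJ := S.join_mem_pencil (hne ha)
    have hbJ : b ∈ S.join p a := hab ▸ (S.join_mem_pencil (hne hb)).2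
    exact hp (eq_of_mem_of_mem_s8 hab' hL hJ.1.1 ha hb hJ.2 hbJ ▸ hJ.1.2)

variable [Finite M]

lemma ncard_pencil_eq_ncard_add {p : M} {L : Set M} (hL : L ∈ S.lines) (hp : p ∉ L) :
    (S.pencil p).ncard = L.ncard + {K ∈ S.pencil p | K ∩ L = ∅}.ncard := by
  rw [ncard_eq_ncard_pencil_meeting hL hp,
    ← Set.ncard_inter_add_ncard_sdiff_eq_ncard (S.pencil p) {K | (K ∩ L).Nonempty}]
  simp only [Set.sdiff_eq, Set.compl_ofPred, Set.not_nonempty_iff_eq_empty]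
  rfl

lemma ncard_pencil_of_isAffine {p : M} {L : Set M} (hL : S.IsAffine L) (hp : p ∉ L) :
    (S.pencil p).ncard = L.ncard + 1 := by
  obtain ⟨K₀, hK₀, hK₀_unique⟩ := hL.2 p hp
  have hpar : {K ∈ S.pencil p | K ∩ L = ∅} = {K₀} :=
    Set.ext fun K => ⟨fun ⟨⟨hK, hpK⟩, hKL⟩ => hK₀_unique K ⟨hK, hpK, hKL⟩,
      fun hK => hK ▸ ⟨⟨hK₀.1, hK₀.2.1⟩, hK₀.2.2⟩⟩
  rw [ncard_pencil_eq_ncard_add hL.1 hp, hpar, Set.ncard_singleton]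

lemma ncard_pencil_of_isProjective {p : M} {L : Set M} (hL : S.IsProjective L) (hp : p ∉ L) :
    (S.pencil p).ncard = L.ncard := by
  have hpar : {K ∈ S.pencil p | K ∩ L = ∅} = ∅ := by
    refine Set.eq_empty_of_forall_notMem fun K ⟨⟨hK, hpK⟩, hKL⟩ => ?_
    obtain ⟨z, hzL, hzK⟩ := hL.2 K hK fun h => hp (h ▸ hpK)
    exact hKL.subset ⟨hzK, hzL⟩
  rw [ncard_pencil_eq_ncard_add hL.1 hp, hpar, Set.ncard_empty, Nat.add_zero]

lemma ncard_pencil_eq_of_notMem {L : Set M} (hL : S.IsAffine L ∨ S.IsProjective L) {p r : M}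
    (hp : p ∉ L) (hr : r ∉ L) : (S.pencil p).ncard = (S.pencil r).ncard := by
  rcases hL with hL | hL
  · rw [ncard_pencil_of_isAffine hL hp, ncard_pencil_of_isAffine hL hr]
  · rw [ncard_pencil_of_isProjective hL hp, ncard_pencil_of_isProjective hL hr]

end LinearSpace

open LinearSpace

/-- In a finite linear space in which every line is affine or projective, if there is
an affine line with exactly `q` points, then every point lies on exactly `q + 1`
lines. -/
theorem every_pencil_card_eq {M : Type*} [Finite M] (S : LinearSpace M)
    (hdich : ∀ L ∈ S.lines, S.IsAffine L ∨ S.IsProjective L)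
    (A : Set M) (hA : S.IsAffine A) (q : ℕ) (hcard : A.ncard = q) :
    ∀ x : M, {K : Set M | K ∈ S.lines ∧ x ∈ K}.ncard = q + 1 := by
  intro x
  change (S.pencil x).ncard = q + 1
  by_cases hxA : x ∈ A
  · obtain ⟨y, hyA, hyx⟩ := exists_mem_ne hA.1 x
    obtain ⟨K, ⟨hK, hyK⟩, L, ⟨hL, hyL⟩, hKA, hLA, hLK⟩ := S.exists_two_lines_ne y A
    obtain ⟨r, hrL, hry⟩ := exists_mem_ne hL y
    have hxK := notMem_of_ne_of_mem_inter hA.1 hK (Ne.symm hKA) hyA hyK hxA hyx.symm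
    have hrA := notMem_of_ne_of_mem_inter hL hA.1 hLA hyL hyA hrL hry
    have hrK := notMem_of_ne_of_mem_inter hL hK hLK hyL hyK hrL hry
    rw [ncard_pencil_eq_of_notMem (hdich K hK) hxK hrK, ncard_pencil_of_isAffine hA hrA, hcard]
  · rw [ncard_pencil_of_isAffine hA hxA, hcard]
end

section
/- Let (M, 𝓛) be a finite linear space in which every line is either affine or projective, and suppose that both an affine line and a projective line exist. Then the affine lines of 𝓛 are pairwise disjoint and every point of M lies on exactly one affine line. -/
open LinearSpace

theorem finsum_mem_const_eq_ncard_mul {ι : Type*} (s : Set ι) (n : ℕ) :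
    ∑ᶠ _ ∈ s, n = s.ncard * n := by
  rw [← finsum_one, finsum_mem_mul, one_mul]

namespace LinearSpace

variable {M : Type*} (S : LinearSpace M)

lemma inter_subsingleton {L K : Set M} (hL : L ∈ S.lines) (hK : K ∈ S.lines) (hne : L ≠ K) :
    (L ∩ K).Subsingleton := by
  intro p hp q hq
  by_contra hpq
  exact hne ((S.join_unique p q hpq).unique ⟨hL, hp.1, hq.1⟩ ⟨hK, hp.2, hq.2⟩)

lemma three_le_encard {L : Set M} (hL : L ∈ S.lines) : 3 ≤ L.encard := by
  obtain ⟨a, b, c, ha, hb, hc, hab, hac, hbc⟩ := S.exists_three_points L hL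
  calc (3 : ℕ∞) = ({a, b, c} : Set M).encard :=
        (Set.encard_eq_three.mpr ⟨a, b, c, hab, hac, hbc, rfl⟩).symm
    _ ≤ L.encard := Set.encard_le_encard (by simp [Set.insert_subset_iff, *])

lemma exists_mem_line_ne_ne (p : M) (A B : Set M) : ∃ K ∈ S.lines, p ∈ K ∧ K ≠ A ∧ K ≠ B := by
  obtain ⟨L₁, L₂, L₃, h₁, h₂, h₃, m₁, m₂, m₃, n₁₂, n₁₃, n₂₃⟩ := S.exists_three_lines p
  by_contra! h
  have e₁ := h L₁ h₁ m₁
  have e₂ := h L₂ h₂ m₂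
  have e₃ := h L₃ h₃ m₃
  by_cases a₁ : L₁ = A <;> by_cases a₂ : L₂ = A <;> by_cases a₃ : L₃ = A <;> simp_all

lemma exists_mem_notMem_notMem {K A B : Set M} (hK : K ∈ S.lines) (hA : A ∈ S.lines)
    (hB : B ∈ S.lines) (hKA : K ≠ A) (hKB : K ≠ B) : ∃ x ∈ K, x ∉ A ∧ x ∉ B := by
  by_contra! h
  have hcover : K ⊆ (K ∩ A) ∪ (K ∩ B) := fun x hx ↦ by grind
  have hle : K.encard ≤ 2 := calc
    K.encard ≤ (K ∩ A).encard + (K ∩ B).encard :=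
      (Set.encard_le_encard hcover).trans (Set.encard_union_le _ _)
    _ ≤ 1 + 1 := add_le_add
      (Set.encard_le_one_iff_subsingleton.mpr (S.inter_subsingleton hK hA hKA))
      (Set.encard_le_one_iff_subsingleton.mpr (S.inter_subsingleton hK hB hKB))
    _ = 2 := one_add_one_eq_two
  exact absurd ((S.three_le_encard hK).trans hle) (by norm_num)

lemma exists_notMem_notMem {A B : Set M} (hA : A ∈ S.lines) (hB : B ∈ S.lines) :
    ∃ x, x ∉ A ∧ x ∉ B := by
  obtain ⟨a, -, -, ha, -⟩ := S.exists_three_points A hA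
  obtain ⟨K, hK, -, hKA, hKB⟩ := S.exists_mem_line_ne_ne a A B
  obtain ⟨x, -, hx⟩ := S.exists_mem_notMem_notMem hK hA hB hKA hKB
  exact ⟨x, hx⟩

lemma exists_line_notMem (p : M) : ∃ L ∈ S.lines, p ∉ L := by
  obtain ⟨L₁, L₂, -, h₁, h₂, -, m₁, m₂, -, n₁₂, -⟩ := S.exists_three_lines p
  obtain ⟨q, hq₁, hq₂, -⟩ := S.exists_mem_notMem_notMem h₁ h₂ h₂ n₁₂ n₁₂
  obtain ⟨K, hK, hqK, hK₁, -⟩ := S.exists_mem_line_ne_ne q L₁ L₁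
  refine ⟨K, hK, fun hpK ↦ hq₂ ?_⟩
  rwa [S.inter_subsingleton hK h₁ hK₁ ⟨hqK, hq₁⟩ ⟨hpK, m₁⟩]

variable {S} in
lemma IsAffine.not_isProjective {L : Set M} (hA : S.IsAffine L) : ¬ S.IsProjective L := by
  intro hP
  obtain ⟨p, hp, -⟩ := S.exists_notMem_notMem hA.1 hA.1
  obtain ⟨K, ⟨hK, hpK, hKL⟩, -⟩ := hA.2 p hp
  obtain ⟨x, hxL, hxK⟩ := hP.2 K hK (fun h ↦ hp (h ▸ hpK))
  exact Set.eq_empty_iff_forall_notMem.mp hKL x ⟨hxK, hxL⟩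

def linesThrough (p : M) : Set (Set M) := {K | K ∈ S.lines ∧ p ∈ K}

def affineLinesThrough (p : M) : Set (Set M) := {A | S.IsAffine A ∧ p ∈ A}

def projectiveLinesThrough (p : M) : Set (Set M) := {L | S.IsProjective L ∧ p ∈ L}

def parallelClass (A : Set M) : Set (Set M) := {K | K ∈ S.lines ∧ Parallel K A}

lemma ncard_linesThrough_inter_nonempty {L : Set M} (hL : L ∈ S.lines) {p : M} (hp : p ∉ L) :
    (S.linesThrough p ∩ {K | (K ∩ L).Nonempty}).ncard = L.ncard := by
  refine Set.ncard_congr (fun K hK ↦ hK.2.some) (fun K hK ↦ hK.2.some_mem.2) ?_ ?_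
  · intro K K' hK hK' h
    have hq := hK.2.some_mem
    have hq' := hK'.2.some_mem
    rw [← h] at hq'
    exact (S.join_unique p _ fun h ↦ hp (h ▸ hq.2)).unique ⟨hK.1.1, hK.1.2, hq.1⟩
      ⟨hK'.1.1, hK'.1.2, hq'.1⟩
  · intro q hq
    obtain ⟨K, ⟨hK, hpK, hqK⟩, -⟩ := S.join_unique p q (fun h ↦ hp (h ▸ hq))
    have hKq : (K ∩ L).Nonempty := ⟨q, hqK, hq⟩
    exact ⟨K, ⟨⟨hK, hpK⟩, hKq⟩, S.inter_subsingleton hK hL (fun h ↦ hp (h ▸ hpK))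
      hKq.some_mem ⟨hqK, hq⟩⟩

lemma linesThrough_eq_union (hdich : ∀ L ∈ S.lines, S.IsAffine L ∨ S.IsProjective L) (p : M) :
    S.linesThrough p = S.affineLinesThrough p ∪ S.projectiveLinesThrough p := by
  ext K
  constructor
  · rintro ⟨hK, hpK⟩
    exact (hdich K hK).imp (fun h ↦ ⟨h, hpK⟩) (fun h ↦ ⟨h, hpK⟩)
  · rintro (⟨hK, hpK⟩ | ⟨hK, hpK⟩)
    exacts [⟨hK.1, hpK⟩, ⟨hK.1, hpK⟩]

lemma disjoint_affineLinesThrough_projectiveLinesThrough (p : M) :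
    Disjoint (S.affineLinesThrough p) (S.projectiveLinesThrough p) :=
  Set.disjoint_left.mpr fun _ hA hP ↦ hA.1.not_isProjective hP.1

lemma biUnion_linesThrough_sdiff (p : M) : ⋃ K ∈ S.linesThrough p, K \ {p} = Set.univ \ {p} := by
  refine Set.eq_of_subset_of_subset (by simp) fun x ⟨_, hxp⟩ ↦ ?_
  obtain ⟨K, ⟨hK, hpK, hxK⟩, -⟩ := S.join_unique p x (Ne.symm hxp)
  exact Set.mem_biUnion ⟨hK, hpK⟩ ⟨hxK, hxp⟩

lemma pairwiseDisjoint_linesThrough_sdiff (p : M) :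
    (S.linesThrough p).PairwiseDisjoint (· \ {p}) := by
  intro K ⟨hK, hpK⟩ K' ⟨hK', hpK'⟩ hne
  refine Set.disjoint_left.mpr fun x ⟨hxK, hxp⟩ ⟨hxK', _⟩ ↦ hxp ?_
  exact S.inter_subsingleton hK hK' hne ⟨hxK, hxK'⟩ ⟨hpK, hpK'⟩

variable {S} in
lemma IsAffine.isBiaffine (hdich : ∀ L ∈ S.lines, S.IsAffine L ∨ S.IsProjective L)
    {A : Set M} (hA : S.IsAffine A) : S.IsBiaffine A := by
  refine ⟨hA, fun K hK hKA ↦ ?_⟩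
  rcases hKA with rfl | hdisj
  · exact hA
  refine (hdich K hK).resolve_right fun hP ↦ ?_
  have hne : A ≠ K := by
    rintro rfl
    exact hA.not_isProjective hP
  exact (hP.2 A hA.1 hne).ne_empty hdisj

variable {S} in
lemma IsAffine.biUnion_parallelClass {A : Set M} (hA : S.IsAffine A) :
    ⋃ K ∈ S.parallelClass A, K = Set.univ := by
  refine Set.eq_univ_of_forall fun x ↦ ?_
  by_cases hx : x ∈ A
  · exact Set.mem_biUnion ⟨hA.1, Or.inl rfl⟩ hx
  · obtain ⟨K, ⟨hK, hxK, hKA⟩, -⟩ := hA.2 x hx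
    exact Set.mem_biUnion ⟨hK, Or.inr hKA⟩ hxK

variable {S} in
lemma IsAffine.pairwiseDisjoint_parallelClass {A : Set M} (hA : S.IsAffine A) :
    (S.parallelClass A).PairwiseDisjoint id := by
  intro K ⟨hK, hKA⟩ K' ⟨hK', hK'A⟩ hne
  rw [Function.onFun, id, id, Set.disjoint_iff_inter_eq_empty]
  rcases hKA with rfl | hKA <;> rcases hK'A with rfl | hK'A
  · exact absurd rfl hne
  · rwa [Set.inter_comm]
  · exact hKA
  · refine Set.eq_empty_of_forall_notMem fun x ⟨hxK, hxK'⟩ ↦ hne ?_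
    have hxA : x ∉ A := fun hxA ↦ Set.eq_empty_iff_forall_notMem.mp hKA x ⟨hxK, hxA⟩
    exact (hA.2 x hxA).unique ⟨hK, hxK, hKA⟩ ⟨hK', hxK', hK'A⟩

section Finite

variable [Finite M]

lemma three_le_ncard {L : Set M} (hL : L ∈ S.lines) : 3 ≤ L.ncard := by
  have := S.three_le_encard hL
  rw [← (Set.toFinite L).cast_ncard_eq] at this
  exact_mod_cast this

variable {S} in
lemma IsAffine.ncard_linesThrough {L : Set M} (hA : S.IsAffine L) {p : M} (hp : p ∉ L) :
    (S.linesThrough p).ncard = L.ncard + 1 := by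
  obtain ⟨K, hK, hKu⟩ := hA.2 p hp
  have hdisjoint : S.linesThrough p \ {K | (K ∩ L).Nonempty} = {K} := by
    ext K'
    simp only [linesThrough, Set.mem_sdiff, Set.mem_ofPred_eq, Set.not_nonempty_iff_eq_empty,
      and_assoc, Set.mem_singleton_iff]
    exact ⟨hKu K', fun h ↦ h ▸ hK⟩
  rw [← Set.ncard_inter_add_ncard_sdiff_eq_ncard _ {K | (K ∩ L).Nonempty},
    S.ncard_linesThrough_inter_nonempty hA.1 hp, hdisjoint, Set.ncard_singleton]

variable {S} in
lemma IsProjective.ncard_linesThrough {L : Set M} (hP : S.IsProjective L) {p : M} (hp : p ∉ L) :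
    (S.linesThrough p).ncard = L.ncard := by
  have hdisjoint : S.linesThrough p \ {K | (K ∩ L).Nonempty} = ∅ := by
    refine Set.eq_empty_of_forall_notMem fun K ⟨⟨hK, hpK⟩, hKL⟩ ↦ hKL ?_
    rw [Set.mem_ofPred_eq, Set.inter_comm]
    exact hP.2 K hK fun h ↦ hp (h ▸ hpK)
  rw [← Set.ncard_inter_add_ncard_sdiff_eq_ncard _ {K | (K ∩ L).Nonempty},
    S.ncard_linesThrough_inter_nonempty hP.1 hp, hdisjoint, Set.ncard_empty, add_zero]

variable {S} in
lemma IsProjective.ncard_eq_ncard_add_one {A P : Set M} (hP : S.IsProjective P)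
    (hA : S.IsAffine A) :
    P.ncard = A.ncard + 1 := by
  obtain ⟨p, hpA, hpP⟩ := S.exists_notMem_notMem hA.1 hP.1
  rw [← hP.ncard_linesThrough hpP, hA.ncard_linesThrough hpA]

variable {S} in
lemma IsAffine.ncard_eq_ncard {A B P : Set M} (hA : S.IsAffine A) (hB : S.IsAffine B)
    (hP : S.IsProjective P) : A.ncard = B.ncard := by
  have := hP.ncard_eq_ncard_add_one hA
  have := hP.ncard_eq_ncard_add_one hB
  omega

lemma ncard_linesThrough (hdich : ∀ L ∈ S.lines, S.IsAffine L ∨ S.IsProjective L)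
    {A P : Set M} (hA : S.IsAffine A) (hP : S.IsProjective P) (p : M) :
    (S.linesThrough p).ncard = A.ncard + 1 := by
  obtain ⟨L, hL, hpL⟩ := S.exists_line_notMem p
  rcases hdich L hL with hL | hL
  · rw [hL.ncard_linesThrough hpL, hL.ncard_eq_ncard hA hP]
  · rw [hL.ncard_linesThrough hpL, hL.ncard_eq_ncard_add_one hA]

lemma ncard_affineLinesThrough_add_ncard_projectiveLinesThrough
    (hdich : ∀ L ∈ S.lines, S.IsAffine L ∨ S.IsProjective L)
    {A P : Set M} (hA : S.IsAffine A) (hP : S.IsProjective P) (p : M) :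
    (S.affineLinesThrough p).ncard + (S.projectiveLinesThrough p).ncard = A.ncard + 1 := by
  rw [← Set.ncard_union_eq (S.disjoint_affineLinesThrough_projectiveLinesThrough p),
    ← S.linesThrough_eq_union hdich, S.ncard_linesThrough hdich hA hP]

lemma card_eq_sq_add_ncard_projectiveLinesThrough
    (hdich : ∀ L ∈ S.lines, S.IsAffine L ∨ S.IsProjective L)
    {A P : Set M} (hA : S.IsAffine A) (hP : S.IsProjective P) (p : M) :
    Nat.card M = A.ncard ^ 2 + (S.projectiveLinesThrough p).ncard := by
  obtain ⟨k, hk⟩ : ∃ k, A.ncard = k + 1 := ⟨A.ncard - 1, by have := S.three_le_ncard hA.1; omega⟩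
  have hsdiff {K : Set M} (hpK : p ∈ K) : (K \ {p}).ncard + 1 = K.ncard :=
    Set.ncard_sdiff_singleton_add_one hpK
  have hcount := calc (Set.univ \ {p}).ncard
      = (⋃ K ∈ S.linesThrough p, K \ {p}).ncard := by rw [S.biUnion_linesThrough_sdiff]
    _ = ∑ᶠ K ∈ S.linesThrough p, (K \ {p}).ncard :=
      (Set.toFinite _).ncard_biUnion (fun _ _ ↦ Set.toFinite _)
        (S.pairwiseDisjoint_linesThrough_sdiff p)
    _ = ∑ᶠ K ∈ S.affineLinesThrough p, (K \ {p}).ncard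
        + ∑ᶠ K ∈ S.projectiveLinesThrough p, (K \ {p}).ncard := by
      rw [S.linesThrough_eq_union hdich, finsum_mem_union
        (S.disjoint_affineLinesThrough_projectiveLinesThrough p) (Set.toFinite _) (Set.toFinite _)]
    _ = ∑ᶠ _ ∈ S.affineLinesThrough p, k + ∑ᶠ _ ∈ S.projectiveLinesThrough p, (k + 1) := by
      congr 1 <;> refine finsum_mem_congr rfl fun K ⟨hK, hpK⟩ ↦ ?_
      · have := hsdiff hpK; have := hK.ncard_eq_ncard hA hP; omega
      · have := hsdiff hpK; have := hK.ncard_eq_ncard_add_one hA; omega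
    _ = (S.affineLinesThrough p).ncard * k + (S.projectiveLinesThrough p).ncard * (k + 1) := by
      rw [finsum_mem_const_eq_ncard_mul, finsum_mem_const_eq_ncard_mul]
  calc Nat.card M = (Set.univ \ {p}).ncard + 1 := by
        rw [← Set.ncard_univ, Set.ncard_sdiff_singleton_add_one (Set.mem_univ p)]
    _ = ((S.affineLinesThrough p).ncard + (S.projectiveLinesThrough p).ncard) * k
          + (S.projectiveLinesThrough p).ncard + 1 := by rw [hcount]; ring
    _ = A.ncard ^ 2 + (S.projectiveLinesThrough p).ncard := by
      rw [S.ncard_affineLinesThrough_add_ncard_projectiveLinesThrough hdich hA hP, hk]; ring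

lemma ncard_dvd_card (hdich : ∀ L ∈ S.lines, S.IsAffine L ∨ S.IsProjective L)
    {A P : Set M} (hA : S.IsAffine A) (hP : S.IsProjective P) : A.ncard ∣ Nat.card M := by
  refine Dvd.intro_left (S.parallelClass A).ncard ?_
  calc (S.parallelClass A).ncard * A.ncard = ∑ᶠ _ ∈ S.parallelClass A, A.ncard :=
        (finsum_mem_const_eq_ncard_mul _ _).symm
    _ = ∑ᶠ K ∈ S.parallelClass A, K.ncard :=
        finsum_mem_congr rfl fun K ⟨hK, hKA⟩ ↦
          hA.ncard_eq_ncard ((hA.isBiaffine hdich).2 K hK hKA) hP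
    _ = (⋃ K ∈ S.parallelClass A, K).ncard :=
        ((Set.toFinite _).ncard_biUnion (fun _ _ ↦ Set.toFinite _)
          hA.pairwiseDisjoint_parallelClass).symm
    _ = Nat.card M := by rw [hA.biUnion_parallelClass, Set.ncard_univ]

lemma ncard_affineLinesThrough_eq_one (hdich : ∀ L ∈ S.lines, S.IsAffine L ∨ S.IsProjective L)
    {A P : Set M} (hA : S.IsAffine A) (hP : S.IsProjective P) (x : M) :
    (S.affineLinesThrough x).ncard = 1 := by
  have hcard := S.card_eq_sq_add_ncard_projectiveLinesThrough hdich hA hP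
  have hlines := S.ncard_affineLinesThrough_add_ncard_projectiveLinesThrough hdich hA hP
  obtain ⟨a, -, -, ha, -⟩ := S.exists_three_points A hA.1
  obtain ⟨z, -, -, hz, -⟩ := S.exists_three_points P hP.1
  have ht_pos : 0 < (S.projectiveLinesThrough a).ncard := by
    have : 0 < (S.projectiveLinesThrough z).ncard := (Set.ncard_pos).mpr ⟨P, hP, hz⟩
    have := hcard a
    have := hcard z
    omega
  have ht_le : (S.projectiveLinesThrough a).ncard ≤ A.ncard := by
    have : 0 < (S.affineLinesThrough a).ncard := (Set.ncard_pos).mpr ⟨A, hA, ha⟩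
    have := hlines a
    omega
  have hdvd : A.ncard ∣ (S.projectiveLinesThrough a).ncard :=
    (Nat.dvd_add_right (dvd_pow_self _ two_ne_zero)).mp (hcard a ▸ S.ncard_dvd_card hdich hA hP)
  have ht : (S.projectiveLinesThrough a).ncard = A.ncard :=
    ht_le.antisymm (Nat.le_of_dvd ht_pos hdvd)
  have := hlines x
  have := hcard x
  have := hcard a
  omega

end Finite

end LinearSpace

/-- In a finite linear space in which every line is affine or projective, if both an
affine and a projective line exist, then the affine lines are pairwise disjoint and
every point lies on exactly one affine line. -/
theorem affine_lines_partition {M : Type*} [Finite M] (S : LinearSpace M)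
    (hdich : ∀ L ∈ S.lines, S.IsAffine L ∨ S.IsProjective L)
    (hex_aff : ∃ A : Set M, S.IsAffine A)
    (hex_proj : ∃ L : Set M, S.IsProjective L) :
    (∀ A B : Set M, S.IsAffine A → S.IsAffine B → A ≠ B → A ∩ B = ∅) ∧
    (∀ x : M, ∃! A : Set M, S.IsAffine A ∧ x ∈ A) := by
  obtain ⟨A, hA⟩ := hex_aff
  obtain ⟨P, hP⟩ := hex_proj
  have hunique (x : M) : ∃! B : Set M, S.IsAffine B ∧ x ∈ B := by
    obtain ⟨B, hB⟩ := Set.ncard_eq_one.mp (S.ncard_affineLinesThrough_eq_one hdich hA hP x)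
    exact ⟨B, Set.eq_singleton_iff_unique_mem.mp hB⟩
  refine ⟨fun B C hB hC hBC ↦ Set.eq_empty_of_forall_notMem fun x ⟨hxB, hxC⟩ ↦ hBC ?_, hunique⟩
  exact (hunique x).unique ⟨hB, hxB⟩ ⟨hC, hxC⟩
end
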